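/- arXiv:1105.5908 — 11 statements merged into one kernel-verified Lean document; each statement's English description precedes it below -/
import Mathlib

section
/- With γ an inner product and ψ a 2-form on V, for any skew-symmetric bilinear form P on V* (equivalently a bivector with ♯_P : V* → V), the endomorphism Id − ♭_{ψ−γ} ∘ ♯_P of V* is an isomorphism. -/
/-- `Id − ♭_{ψ−γ} ∘ ♯_P` is an isomorphism of `V*`. -/
theorem stmt2 {V : Type} [AddCommGroup V] [Module ℝ V] [FiniteDimensional ℝ V]
    (γ ψ : V →ₗ[ℝ] Module.Dual ℝ V)
    (hγsym : ∀ X Y, γ X Y = γ Y X)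
    (hγpos : ∀ X, X ≠ 0 → 0 < γ X X)
    (hψskew : ∀ X Y, ψ X Y = - ψ Y X)
    (P : Module.Dual ℝ V →ₗ[ℝ] V)
    (hPskew : ∀ α β : Module.Dual ℝ V, α (P β) = - β (P α)) :
    Function.Bijective
      ((LinearMap.id : Module.Dual ℝ V →ₗ[ℝ] Module.Dual ℝ V) - (ψ - γ) ∘ₗ P) := by
  have hinj : Function.Injective
      ((LinearMap.id : Module.Dual ℝ V →ₗ[ℝ] Module.Dual ℝ V) - (ψ - γ) ∘ₗ P) := by
    rw [← LinearMap.ker_eq_bot, LinearMap.ker_eq_bot']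
    intro α hα
    have hα' : α = (ψ - γ) (P α) := by
      have := hα
      simp only [LinearMap.sub_apply, LinearMap.id_apply, LinearMap.comp_apply,
        sub_eq_zero] at this
      exact this
    set U := P α with hU
    have h0 : α U = 0 := by
      have := hPskew α α
      linarith
    have hγ0 : γ U U = 0 := by
      have h1 : α U = ψ U U - γ U U := by
        conv_lhs => rw [hα']
        simp [LinearMap.sub_apply]
      have h2 : ψ U U = 0 := by
        have := hψskew U U; linarith
      rw [h0, h2] at h1
      linarith
    have hU0 : U = 0 := by
      by_contra h
      exact absurd hγ0 (ne_of_gt (hγpos U h))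
    rw [hα', hU0]
    simp
  exact ⟨hinj, LinearMap.injective_iff_surjective.mp hinj⟩
end

section
/- Conversely, let E be a g-isotropic subspace of (W,g) with a non-degenerate skew-symmetric bilinear form ω on E. Then there exists a unique g-skew-symmetric endomorphism τ of W with τ² = 0, im τ = E, and ω(e₁, τX) = g(e₁, X) for all e₁ ∈ E, X ∈ W. -/
/-!
Non-degeneracy of `ω` identifies `E` with its dual, so `τ X` can be taken to be the element of `E`
that `ω` pairs with the functional `e ↦ g(e, X)`: this is the identity `ω(e, τX) = g(e, X)`, and it
determines `τ` once `im τ ⊆ E`. Isotropy of `E` gives `ω(e, τ²X) = g(e, τX) = 0`, hence `τ² = 0`;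
skew-symmetry of `ω` and symmetry of `g` turn `g(τu, v) = ω(τu, τv)` into `g`-skewness of `τ`; and
since every functional on `E` extends to `W` and is represented by `g`, every element of `E` is some
`τX`.
-/

namespace LinearMap.BilinForm

variable {K W : Type*} [Field K] [AddCommGroup W] [Module K W]
  {g : W →ₗ[K] W →ₗ[K] K} {E : Submodule K W} {ω : E →ₗ[K] E →ₗ[K] K}

theorem existsUnique_forall_apply_eq [FiniteDimensional K E] (hω : ω.Nondegenerate) :
    ∃! τ : W →ₗ[K] E, ∀ (e : E) (X : W), ω e (τ X) = g e X := by
  refine ⟨(toDual ω.flip (flip_nondegenerate.mpr hω)).symm ∘ₗ E.dualRestrict ∘ₗ g.flip,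
    fun e X => ?_, ?_⟩
  · rw [← LinearMap.flip_apply ω, LinearMap.comp_apply, LinearMap.comp_apply, LinearEquiv.coe_coe,
      apply_toDual_symm_apply, Submodule.dualRestrict_apply, LinearMap.flip_apply]
  · intro τ hτ
    ext X : 1
    refine toDual ω.flip (flip_nondegenerate.mpr hω) |>.injective ?_
    ext e
    simp [toDual_def, hτ, Submodule.dualRestrict_apply]

variable {τ : W →ₗ[K] E}

theorem apply_apply_eq_zero_of_isotropic (hτ : ∀ (e : E) (X : W), ω e (τ X) = g e X)
    (hω : ω.SeparatingRight) (hiso : ∀ e ∈ E, ∀ f ∈ E, g e f = 0) (X : W) : τ (τ X) = 0 :=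
  hω _ fun e => by rw [hτ, hiso _ e.2 _ (τ X).2]

theorem apply_left_eq_neg_apply_right (hτ : ∀ (e : E) (X : W), ω e (τ X) = g e X)
    (hsym : ∀ u v, g u v = g v u) (hskew : ∀ e f : E, ω e f = -ω f e) (u v : W) :
    g (τ u) v = -g u (τ v) := by
  rw [← hτ, hskew, hτ, hsym]

theorem surjective_of_nondegenerate [FiniteDimensional K W]
    (hτ : ∀ (e : E) (X : W), ω e (τ X) = g e X) (hg : g.Nondegenerate)
    (hω : ω.SeparatingRight) : Function.Surjective τ := by
  intro y
  let X := (toDual g.flip (flip_nondegenerate.mpr hg)).symm (Subspace.dualLift E (ω.flip y))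
  refine ⟨X, sub_eq_zero.mp <| hω _ fun e => ?_⟩
  rw [map_sub, hτ, ← LinearMap.flip_apply g, apply_toDual_symm_apply,
    Subspace.dualLift_of_subtype, LinearMap.flip_apply, sub_self]

end LinearMap.BilinForm

open LinearMap.BilinForm

/-- an isotropic subspace `E` with a non-degenerate skew 2-form `ω`
is the image of a unique `g`-skew 2-nilpotent endomorphism `τ` with
`ω(e₁, τX) = g(e₁, X)`. -/
theorem stmt5 {W : Type} [AddCommGroup W] [Module ℝ W] [FiniteDimensional ℝ W]
    (g : W →ₗ[ℝ] W →ₗ[ℝ] ℝ)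
    (hsym : ∀ u v, g u v = g v u)
    (hnd : ∀ u, (∀ v, g u v = 0) → u = 0)
    (E : Submodule ℝ W)
    (hiso : ∀ e ∈ E, ∀ f ∈ E, g e f = 0)
    (ω : E →ₗ[ℝ] E →ₗ[ℝ] ℝ)
    (hωskew : ∀ e f : E, ω e f = - ω f e)
    (hωnd : ∀ e : E, (∀ f : E, ω e f = 0) → e = 0) :
    ∃! τ : W →ₗ[ℝ] W,
      τ ∘ₗ τ = 0 ∧
      LinearMap.range τ = E ∧
      (∀ u v : W, g (τ u) v = - g u (τ v)) ∧
      (∀ (e₁ : E) (X : W) (h : τ X ∈ E), ω e₁ ⟨τ X, h⟩ = g e₁ X) := by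
  have hg : g.Nondegenerate :=
    (LinearMap.IsRefl.nondegenerate_iff_separatingLeft fun u v h => by rwa [hsym]).mpr hnd
  have hω : ω.Nondegenerate :=
    (LinearMap.IsRefl.nondegenerate_iff_separatingLeft fun e f h => by
      rw [hωskew, h, neg_zero]).mpr hωnd
  obtain ⟨τ, hτ, hτ_unique⟩ := existsUnique_forall_apply_eq (g := g) hω
  refine ⟨E.subtype ∘ₗ τ, ⟨?_, ?_, ?_, fun e X _ => hτ e X⟩, ?_⟩
  · ext X
    simp [apply_apply_eq_zero_of_isotropic hτ hω.2 hiso]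
  · have hτ_surj := surjective_of_nondegenerate hτ hg hω.2
    rw [LinearMap.range_comp_of_range_eq_top _ (LinearMap.range_eq_top.mpr hτ_surj),
      Submodule.range_subtype]
  · exact apply_left_eq_neg_apply_right hτ hsym hωskew
  · rintro τ' ⟨-, hrange, -, hτ'⟩
    have hmem (X : W) : τ' X ∈ E := hrange ▸ LinearMap.mem_range_self τ' X
    rw [← hτ_unique (τ'.codRestrict E hmem) fun e X => hτ' e X (hmem X),
      LinearMap.subtype_comp_codRestrict]
end

section
/- In the generalized Riemannian setting W = V ⊕ V* with G determined by inner product γ and 2-form ψ (V± = graph of ♭_{ψ±γ}), a G-compatible generalized paracomplex structure Ψ corresponds bijectively to a γ-isometry F of V via Ψ(X, ♭_{ψ+γ}X) = (FX, ♭_{ψ−γ}FX); i.e., Ψ satisfies Ψ²=Id, g-skew-symmetry, and φΨ=−Ψφ if and only if F preserves γ: γ(FX,FY)=γ(X,Y). -/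
/-!
Since `γ` is positive definite, `♭_γ` is an isomorphism, so `W = V₊ ⊕ V₋` and a linear
endomorphism of `W` is determined by its values on `V₊` and `V₋`. On these generators
`Ψ² = Id` and `φΨ = −Ψφ` hold for every `F`, because `Ψ` exchanges `V₊` and `V₋` by `F` and
`F⁻¹`. Skewness of `ψ` and symmetry of `γ` give `g = 2γ` on `V₊`, `g = −2γ` on `V₋` and
`V₊ ⊥ V₋`, so `g`-skew-symmetry of `Ψ` on the pair `(V₊, V₋)` reads `γ(FX, Y) = γ(X, F⁻¹Y)`:
exactly the statement that `F` is a `γ`-isometry.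
-/

open Module

section GeneralizedMetric

variable {V : Type*} [AddCommGroup V] [Module ℝ V]

def prodDualPairing (u v : V × Dual ℝ V) : ℝ := u.2 v.1 + v.2 u.1

lemma prodDualPairing_add_left (u u' v : V × Dual ℝ V) :
    prodDualPairing (u + u') v = prodDualPairing u v + prodDualPairing u' v := by
  simp only [prodDualPairing, Prod.fst_add, Prod.snd_add, map_add, LinearMap.add_apply]
  ring

lemma prodDualPairing_add_right (u v v' : V × Dual ℝ V) :
    prodDualPairing u (v + v') = prodDualPairing u v + prodDualPairing u v' := by
  simp only [prodDualPairing, Prod.fst_add, Prod.snd_add, map_add, LinearMap.add_apply]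
  ring

section Graphs

variable {γ ψ : V →ₗ[ℝ] Dual ℝ V} (hγsym : ∀ X Y, γ X Y = γ Y X)
  (hψskew : ∀ X Y, ψ X Y = -ψ Y X)
include hγsym hψskew

lemma prodDualPairing_graph_add_graph_add (X Y : V) :
    prodDualPairing (X, ψ X + γ X) (Y, ψ Y + γ Y) = 2 * γ X Y := by
  simp only [prodDualPairing, LinearMap.add_apply, hψskew Y X, hγsym Y X]
  ring

lemma prodDualPairing_graph_sub_graph_sub (X Y : V) :
    prodDualPairing (X, ψ X - γ X) (Y, ψ Y - γ Y) = -(2 * γ X Y) := by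
  simp only [prodDualPairing, LinearMap.sub_apply, hψskew Y X, hγsym Y X]
  ring

lemma prodDualPairing_graph_add_graph_sub (X Y : V) :
    prodDualPairing (X, ψ X + γ X) (Y, ψ Y - γ Y) = 0 := by
  simp only [prodDualPairing, LinearMap.add_apply, LinearMap.sub_apply, hψskew Y X, hγsym Y X]
  ring

lemma prodDualPairing_graph_sub_graph_add (X Y : V) :
    prodDualPairing (X, ψ X - γ X) (Y, ψ Y + γ Y) = 0 := by
  simp only [prodDualPairing, LinearMap.add_apply, LinearMap.sub_apply, hψskew Y X, hγsym Y X]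
  ring

end Graphs

lemma LinearMap.surjective_of_pos_diag [FiniteDimensional ℝ V] {γ : V →ₗ[ℝ] Dual ℝ V}
    (hγpos : ∀ X, X ≠ 0 → 0 < γ X X) : Function.Surjective γ := by
  have hinj : Function.Injective γ := by
    refine (injective_iff_map_eq_zero γ).mpr fun X hX => ?_
    by_contra hne
    simpa [hX] using hγpos X hne
  exact (LinearMap.injective_iff_surjective_of_finrank_eq_finrank
    Subspace.dual_finrank_eq.symm).mp hinj

lemma exists_eq_graph_add_add_graph_sub (ψ : V →ₗ[ℝ] Dual ℝ V) {γ : V →ₗ[ℝ] Dual ℝ V}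
    (hγ : Function.Surjective γ) (w : V × Dual ℝ V) :
    ∃ A B : V, w = (A, ψ A + γ A) + (B, ψ B - γ B) := by
  obtain ⟨X, α⟩ := w
  obtain ⟨C, hC⟩ := hγ (α - ψ X)
  -- the components `A`, `B` solve `A + B = X`, `A - B = C`
  refine ⟨(1 / 2 : ℝ) • (X + C), (1 / 2 : ℝ) • (X - C), ?_⟩
  refine Prod.ext ?_ ?_
  · simp only [Prod.fst_add]
    module
  · simp only [Prod.snd_add, map_smul, map_add, map_sub, hC]
    module

lemma LinearMap.ext_graph {M : Type*} [AddCommGroup M] [Module ℝ M]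
    (ψ : V →ₗ[ℝ] Dual ℝ V) {γ : V →ₗ[ℝ] Dual ℝ V} (hγ : Function.Surjective γ)
    {f f' : V × Dual ℝ V →ₗ[ℝ] M}
    (hadd : ∀ X, f (X, ψ X + γ X) = f' (X, ψ X + γ X))
    (hsub : ∀ X, f (X, ψ X - γ X) = f' (X, ψ X - γ X)) : f = f' := by
  refine LinearMap.ext fun w => ?_
  obtain ⟨A, B, rfl⟩ := exists_eq_graph_add_add_graph_sub ψ hγ w
  simp only [map_add, hadd, hsub]

section Exchange

variable {γ ψ : V →ₗ[ℝ] Dual ℝ V} {F : V ≃ₗ[ℝ] V} {Ψ : V × Dual ℝ V →ₗ[ℝ] V × Dual ℝ V}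
  (hΨp : ∀ X : V, Ψ (X, ψ X + γ X) = (F X, ψ (F X) - γ (F X)))
  (hΨm : ∀ X : V, Ψ (X, ψ X - γ X) = (F.symm X, ψ (F.symm X) + γ (F.symm X)))
include hΨp hΨm

lemma comp_self_eq_id_of_exchange (hγ : Function.Surjective γ) : Ψ ∘ₗ Ψ = LinearMap.id :=
  LinearMap.ext_graph ψ hγ (by simp [hΨp, hΨm]) (by simp [hΨp, hΨm])

lemma comp_eq_neg_comp_of_exchange (hγ : Function.Surjective γ)
    {φ : V × Dual ℝ V →ₗ[ℝ] V × Dual ℝ V}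
    (hφp : ∀ X : V, φ (X, ψ X + γ X) = (X, ψ X + γ X))
    (hφm : ∀ X : V, φ (X, ψ X - γ X) = -(X, ψ X - γ X)) : φ ∘ₗ Ψ = -(Ψ ∘ₗ φ) :=
  LinearMap.ext_graph ψ hγ
    (fun X => by simp only [LinearMap.comp_apply, LinearMap.neg_apply, hΨp, hφp, hφm])
    (fun X => by simp only [LinearMap.comp_apply, LinearMap.neg_apply, hΨm, hφp, hφm, map_neg,
      neg_neg])

variable (hγsym : ∀ X Y, γ X Y = γ Y X) (hψskew : ∀ X Y, ψ X Y = -ψ Y X)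
include hγsym hψskew

lemma isometry_of_skew (hskew : ∀ u v, prodDualPairing (Ψ u) v = -prodDualPairing u (Ψ v))
    (X Y : V) : γ (F X) (F Y) = γ X Y := by
  have h := hskew (X, ψ X + γ X) (F Y, ψ (F Y) - γ (F Y))
  rw [hΨp, hΨm, F.symm_apply_apply, prodDualPairing_graph_sub_graph_sub hγsym hψskew,
    prodDualPairing_graph_add_graph_add hγsym hψskew] at h
  linarith

lemma skew_of_isometry (hγ : Function.Surjective γ) (hF : ∀ X Y, γ (F X) (F Y) = γ X Y)
    (u v : V × Dual ℝ V) : prodDualPairing (Ψ u) v = -prodDualPairing u (Ψ v) := by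
  obtain ⟨A, B, rfl⟩ := exists_eq_graph_add_add_graph_sub ψ hγ u
  obtain ⟨C, D, rfl⟩ := exists_eq_graph_add_add_graph_sub ψ hγ v
  simp only [map_add, hΨp, hΨm, prodDualPairing_add_left, prodDualPairing_add_right,
    prodDualPairing_graph_add_graph_add hγsym hψskew,
    prodDualPairing_graph_sub_graph_sub hγsym hψskew,
    prodDualPairing_graph_add_graph_sub hγsym hψskew,
    prodDualPairing_graph_sub_graph_add hγsym hψskew]
  rw [← hF A (F.symm D), ← hF (F.symm B) C, F.apply_symm_apply, F.apply_symm_apply]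
  ring

end Exchange

end GeneralizedMetric

/-- the generalized paracomplex structure `Ψ` determined by the
bundle isomorphism `F` (via `Ψ(X,♭_{ψ+γ}X) = (FX,♭_{ψ−γ}FX)` and
`Ψ(X,♭_{ψ−γ}X) = (F⁻¹X,♭_{ψ+γ}F⁻¹X)`) satisfies `Ψ² = Id`, `g`-skew-symmetry
and `φΨ = −Ψφ` iff `F` is a `γ`-isometry. -/
theorem stmt8 {V : Type} [AddCommGroup V] [Module ℝ V] [FiniteDimensional ℝ V]
    (γ ψ : V →ₗ[ℝ] Module.Dual ℝ V)
    (hγsym : ∀ X Y, γ X Y = γ Y X)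
    (hγpos : ∀ X, X ≠ 0 → 0 < γ X X)
    (hψskew : ∀ X Y, ψ X Y = - ψ Y X)
    (g : (V × Module.Dual ℝ V) → (V × Module.Dual ℝ V) → ℝ)
    (hg : ∀ u v, g u v = u.2 v.1 + v.2 u.1)
    (φ : (V × Module.Dual ℝ V) →ₗ[ℝ] (V × Module.Dual ℝ V))
    (hφp : ∀ X : V, φ (X, ψ X + γ X) = (X, ψ X + γ X))
    (hφm : ∀ X : V, φ (X, ψ X - γ X) = -(X, ψ X - γ X))
    (F : V ≃ₗ[ℝ] V)
    (Ψ : (V × Module.Dual ℝ V) →ₗ[ℝ] (V × Module.Dual ℝ V))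
    (hΨp : ∀ X : V, Ψ (X, ψ X + γ X) = (F X, ψ (F X) - γ (F X)))
    (hΨm : ∀ X : V, Ψ (X, ψ X - γ X) = (F.symm X, ψ (F.symm X) + γ (F.symm X))) :
    (Ψ ∘ₗ Ψ = LinearMap.id ∧
     (∀ u v, g (Ψ u) v = - g u (Ψ v)) ∧
     φ ∘ₗ Ψ = - (Ψ ∘ₗ φ)) ↔
    (∀ X Y : V, γ (F X) (F Y) = γ X Y) := by
  obtain rfl : g = prodDualPairing := funext₂ hg
  have hγ : Function.Surjective γ := LinearMap.surjective_of_pos_diag hγpos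
  exact ⟨fun ⟨_, hskew, _⟩ => isometry_of_skew hΨp hΨm hγsym hψskew hskew,
    fun hF => ⟨comp_self_eq_id_of_exchange hΨp hΨm hγ,
      skew_of_isometry hΨp hΨm hγsym hψskew hγ hF,
      comp_eq_neg_comp_of_exchange hΨp hΨm hγ hφp hφm⟩⟩
end

section
/- Let Ψ be a generalized paracomplex structure compatible with a generalized Riemannian structure given by (γ, ψ), corresponding to the γ-isometry F of V. Then the two eigenspaces of Ψ are E = {(X + FX, ♭_ψ(X+FX) + ♭_γ(X − FX)) : X ∈ V} (for eigenvalue +1) and E' = {(X − FX, ♭_ψ(X−FX) + ♭_γ(X + FX)) : X ∈ V} (for eigenvalue −1), and each element of E and E' has a unique such representation. -/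
/-!
Since `♭_γ` is invertible, every `w ∈ V ⊕ V*` decomposes uniquely as
`(A, ♭_{ψ+γ} A) + (B, ♭_{ψ-γ} B)`, i.e. `V ⊕ V* = V₊ ⊕ V₋`. In these coordinates `Ψ` acts as
`(A, B) ↦ (F⁻¹ B, F A)`, so `Ψ w = ± w` exactly when `B = ± F A`, and
`(X ± FX, ♭_ψ(X ± FX) + ♭_γ(X ∓ FX))` is the element with coordinates `(X, ± FX)`.
-/

theorem existsUnique_eq_and_iff {α : Sort*} {a : α} {p : α → Prop} :
    (∃! x, a = x ∧ p x) ↔ p a :=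
  ⟨fun ⟨_, ⟨hx, h⟩, _⟩ => hx ▸ h, fun h => ⟨a, ⟨rfl, h⟩, fun _ hy => hy.1.symm⟩⟩

namespace GeneralizedMetric

variable {V : Type*} [AddCommGroup V] [Module ℝ V] (γ ψ : V →ₗ[ℝ] Module.Dual ℝ V)

theorem injective_of_posDef (hγpos : ∀ X, X ≠ 0 → 0 < γ X X) : Function.Injective γ := by
  refine (injective_iff_map_eq_zero γ).mpr fun X hX => ?_
  by_contra hX0
  simpa [hX] using hγpos X hX0

/-- The splitting `V × V* = V₊ ⊕ V₋`, `(A, B) ↦ (A, ♭_{ψ+γ} A) + (B, ♭_{ψ-γ} B)`. -/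
def graphSum : V × V →ₗ[ℝ] V × Module.Dual ℝ V :=
  (LinearMap.fst ℝ V V + LinearMap.snd ℝ V V).prod
    (ψ ∘ₗ (LinearMap.fst ℝ V V + LinearMap.snd ℝ V V) +
      γ ∘ₗ (LinearMap.fst ℝ V V - LinearMap.snd ℝ V V))

@[simp]
theorem graphSum_apply (A B : V) :
    graphSum γ ψ (A, B) = (A + B, ψ (A + B) + γ (A - B)) := rfl

theorem graphSum_apply_neg (A B : V) :
    graphSum γ ψ (A, -B) = (A - B, ψ (A - B) + γ (A + B)) := by
  simp [sub_eq_add_neg]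

theorem graphSum_apply_eq_add (A B : V) :
    graphSum γ ψ (A, B) = (A, ψ A + γ A) + (B, ψ B - γ B) := by
  simp only [graphSum_apply, Prod.mk_add_mk, map_add, map_sub]
  congr 1
  abel

theorem graphSum_injective (hγ : Function.Injective γ) :
    Function.Injective (graphSum γ ψ) := by
  refine (injective_iff_map_eq_zero _).mpr fun ⟨A, B⟩ h => ?_
  simp only [graphSum_apply, Prod.mk_eq_zero] at h
  obtain ⟨hsum, hform⟩ := h
  obtain rfl : A = B := sub_eq_zero.mp (hγ (by simpa [hsum] using hform))
  have hA : A = 0 := by simpa [← two_smul ℝ A] using hsum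
  simp [hA]

theorem graphSum_surjective [FiniteDimensional ℝ V] (hγ : Function.Injective γ) :
    Function.Surjective (graphSum γ ψ) :=
  (LinearMap.injective_iff_surjective_of_finrank_eq_finrank
    (by simp [Module.finrank_prod, Subspace.dual_finrank_eq])).mp (graphSum_injective γ ψ hγ)

theorem map_graphSum {F : V ≃ₗ[ℝ] V}
    {Ψ : (V × Module.Dual ℝ V) →ₗ[ℝ] (V × Module.Dual ℝ V)}
    (hΨp : ∀ X : V, Ψ (X, ψ X + γ X) = (F X, ψ (F X) - γ (F X)))
    (hΨm : ∀ X : V, Ψ (X, ψ X - γ X) = (F.symm X, ψ (F.symm X) + γ (F.symm X))) (A B : V) :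
    Ψ (graphSum γ ψ (A, B)) = graphSum γ ψ (F.symm B, F A) := by
  rw [graphSum_apply_eq_add, map_add, hΨp, hΨm, add_comm, graphSum_apply_eq_add]

end GeneralizedMetric

open GeneralizedMetric in
theorem stmt9_general {V : Type} [AddCommGroup V] [Module ℝ V] [FiniteDimensional ℝ V]
    (γ ψ : V →ₗ[ℝ] Module.Dual ℝ V)
    (hγpos : ∀ X, X ≠ 0 → 0 < γ X X)
    (F : V ≃ₗ[ℝ] V)
    (Ψ : (V × Module.Dual ℝ V) →ₗ[ℝ] (V × Module.Dual ℝ V))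
    (hΨp : ∀ X : V, Ψ (X, ψ X + γ X) = (F X, ψ (F X) - γ (F X)))
    (hΨm : ∀ X : V, Ψ (X, ψ X - γ X) = (F.symm X, ψ (F.symm X) + γ (F.symm X))) :
    ∀ w : V × Module.Dual ℝ V,
      (Ψ w = w ↔ ∃! X : V, w = (X + F X, ψ (X + F X) + γ (X - F X))) ∧
      (Ψ w = -w ↔ ∃! X : V, w = (X - F X, ψ (X - F X) + γ (X + F X))) := by
  have hγ := injective_of_posDef γ hγpos
  have hinj := graphSum_injective γ ψ hγ
  intro w
  obtain ⟨⟨A, B⟩, rfl⟩ := graphSum_surjective γ ψ hγ w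
  simp only [← graphSum_apply, ← graphSum_apply_neg, map_graphSum γ ψ hΨp hΨm,
    ← map_neg, Prod.neg_mk, hinj.eq_iff, Prod.ext_iff]
  simp only [existsUnique_eq_and_iff, F.symm_apply_eq, map_neg]
  exact ⟨⟨And.left, fun h => ⟨h, h.symm⟩⟩, ⟨And.left, fun h => ⟨h, by rw [h, neg_neg]⟩⟩⟩

/-- the ±1-eigenspaces of `Ψ` consist exactly of the elements
`(X ± FX, ♭_ψ(X ± FX) + ♭_γ(X ∓ FX))`, with unique representation. -/
theorem stmt9 {V : Type} [AddCommGroup V] [Module ℝ V] [FiniteDimensional ℝ V]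
    (γ ψ : V →ₗ[ℝ] Module.Dual ℝ V)
    (hγsym : ∀ X Y, γ X Y = γ Y X)
    (hγpos : ∀ X, X ≠ 0 → 0 < γ X X)
    (hψskew : ∀ X Y, ψ X Y = - ψ Y X)
    (F : V ≃ₗ[ℝ] V)
    (hF : ∀ X Y : V, γ (F X) (F Y) = γ X Y)
    (Ψ : (V × Module.Dual ℝ V) →ₗ[ℝ] (V × Module.Dual ℝ V))
    (hΨp : ∀ X : V, Ψ (X, ψ X + γ X) = (F X, ψ (F X) - γ (F X)))
    (hΨm : ∀ X : V, Ψ (X, ψ X - γ X) = (F.symm X, ψ (F.symm X) + γ (F.symm X))) :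
    ∀ w : V × Module.Dual ℝ V,
      (Ψ w = w ↔ ∃! X : V, w = (X + F X, ψ (X + F X) + γ (X - F X))) ∧
      (Ψ w = -w ↔ ∃! X : V, w = (X - F X, ψ (X - F X) + γ (X + F X))) :=
  stmt9_general γ ψ hγpos F Ψ hΨp hΨm
end

section
/- Let γ be an inner product on V, ψ ∈ Λ²V*, P a bivector with ♯_P : V* → V, and define Q± = ±♯_γ ∘ ♭_{ψ±γ} ∘ ♯_P ∘ ♭_γ ∈ End(V). Assume Q⁻ + Id is invertible. Then F := (Q⁺ − Id)(Q⁻ + Id)⁻¹ is a γ-isometry: γ(FX, FY) = γ(X,Y) for all X, Y ∈ V. -/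
/-!
Positivity makes `♭_γ` injective, so `Q⁺ + Q⁻ = 2 ♯_P ♭_γ` and `Q⁺ − Q⁻ = 2 ♯_γ ♭_ψ ♯_P ♭_γ`.
The first map is `γ`-skew because `P` is skew, and the second contributes `ψ(A, B) + ψ(B, A) = 0`;
expanding gives `γ((Q⁺ − Id)X, (Q⁺ − Id)Y) = γ((Q⁻ + Id)X, (Q⁻ + Id)Y)`, which at `X = R X'`,
`Y = R Y'` with `(Q⁻ + Id) R = Id` is the isometry property of `F = (Q⁺ − Id) R`.
-/

theorem LinearMap.injective_of_apply_self_pos {R V : Type*} [CommRing R] [PartialOrder R]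
    [AddCommGroup V] [Module R V] (γ : V →ₗ[R] Module.Dual R V)
    (hγpos : ∀ X, X ≠ 0 → 0 < γ X X) : Function.Injective γ := by
  refine (injective_iff_map_eq_zero γ).mpr fun W hW => ?_
  by_contra hne
  simpa [hW] using hγpos W hne

section CayleyPair

variable {R V : Type*} [CommRing R] [AddCommGroup V] [Module R V]
  {γ ψ : V →ₗ[R] Module.Dual R V} {P : Module.Dual R V →ₗ[R] V} {Qp Qm : V →ₗ[R] V}

theorem Qp_add_Qm_eq_two_smul (hγ : Function.Injective γ)
    (hQp : ∀ X Z : V, γ (Qp X) Z = (ψ + γ) (P (γ X)) Z)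
    (hQm : ∀ X Z : V, γ (Qm X) Z = - ((ψ - γ) (P (γ X)) Z)) (X : V) :
    Qp X + Qm X = (2 : R) • P (γ X) := by
  refine hγ (LinearMap.ext fun Z => ?_)
  have hp := hQp X Z
  have hm := hQm X Z
  simp only [LinearMap.add_apply, LinearMap.sub_apply] at hp hm
  simp only [map_add, map_smul, LinearMap.add_apply, LinearMap.smul_apply, smul_eq_mul]
  linear_combination hp + hm

variable (hγsym : ∀ X Y, γ X Y = γ Y X) (hψskew : ∀ X Y, ψ X Y = - ψ Y X)
  (hPskew : ∀ α β : Module.Dual R V, α (P β) = - β (P α))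
  (hQp : ∀ X Z : V, γ (Qp X) Z = (ψ + γ) (P (γ X)) Z)
  (hQm : ∀ X Z : V, γ (Qm X) Z = - ((ψ - γ) (P (γ X)) Z))
include hγsym hψskew hQp hQm

theorem bilin_Qp_Qp_eq_bilin_Qm_Qm (hγ : Function.Injective γ) (X Y : V) :
    γ (Qp X) (Qp Y) = γ (Qm X) (Qm Y) := by
  have hsum := congrArg (ψ (P (γ X))) (Qp_add_Qm_eq_two_smul hγ hQp hQm Y)
  have hp := hQp X (Qp Y)
  have hm := hQm X (Qm Y)
  have hp' := hQp Y (P (γ X))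
  have hm' := hQm Y (P (γ X))
  simp only [LinearMap.add_apply, LinearMap.sub_apply, map_add, map_smul, smul_eq_mul]
    at hsum hp hm hp' hm'
  linear_combination hp - hm + hsum + hp' - hm' + hγsym (P (γ X)) (Qp Y)
    - hγsym (P (γ X)) (Qm Y) + 2 * hψskew (P (γ X)) (P (γ Y))

omit hψskew in
include hPskew in
theorem bilin_Qp_add_Qm_add_bilin_Qp_add_Qm (hγ : Function.Injective γ) (X Y : V) :
    γ (Qp X + Qm X) Y + γ X (Qp Y + Qm Y) = 0 := by
  simp only [Qp_add_Qm_eq_two_smul hγ hQp hQm, map_smul, LinearMap.smul_apply, smul_eq_mul]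
  linear_combination 2 * hγsym (P (γ X)) Y + 2 * hPskew (γ Y) (γ X)

include hPskew in
theorem bilin_Qp_sub_self_eq_bilin_Qm_add_self (hγ : Function.Injective γ) (X Y : V) :
    γ (Qp X - X) (Qp Y - Y) = γ (Qm X + X) (Qm Y + Y) := by
  have hQQ := bilin_Qp_Qp_eq_bilin_Qm_Qm hγsym hψskew hQp hQm hγ X Y
  have hmix := bilin_Qp_add_Qm_add_bilin_Qp_add_Qm hγsym hPskew hQp hQm hγ X Y
  simp only [map_add, map_sub, LinearMap.add_apply, LinearMap.sub_apply] at hmix ⊢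
  linear_combination hQQ - hmix

end CayleyPair

theorem stmt11_general {V : Type} [AddCommGroup V] [Module ℝ V]
    (γ ψ : V →ₗ[ℝ] Module.Dual ℝ V)
    (hγsym : ∀ X Y, γ X Y = γ Y X)
    (hγpos : ∀ X, X ≠ 0 → 0 < γ X X)
    (hψskew : ∀ X Y, ψ X Y = - ψ Y X)
    (P : Module.Dual ℝ V →ₗ[ℝ] V)
    (hPskew : ∀ α β : Module.Dual ℝ V, α (P β) = - β (P α))
    (Qp Qm : V →ₗ[ℝ] V)
    (hQp : ∀ X Z : V, γ (Qp X) Z = (ψ + γ) (P (γ X)) Z)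
    (hQm : ∀ X Z : V, γ (Qm X) Z = - ((ψ - γ) (P (γ X)) Z))
    (R : V →ₗ[ℝ] V)
    (hR1 : (Qm + LinearMap.id) ∘ₗ R = LinearMap.id) :
    ∀ X Y : V,
      γ ((Qp - (LinearMap.id : V →ₗ[ℝ] V)) (R X)) ((Qp - (LinearMap.id : V →ₗ[ℝ] V)) (R Y)) = γ X Y := by
  intro X Y
  have hR : ∀ W, Qm (R W) + R W = W := fun W => LinearMap.congr_fun hR1 W
  have key := bilin_Qp_sub_self_eq_bilin_Qm_add_self hγsym hψskew hPskew hQp hQm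
    (γ.injective_of_apply_self_pos hγpos) (R X) (R Y)
  rwa [hR, hR] at key

/-- with `Q± = ±♯_γ ∘ ♭_{ψ±γ} ∘ ♯_P ∘ ♭_γ` and `Q⁻ + Id`
invertible, `F = (Q⁺ − Id)(Q⁻ + Id)⁻¹` is a `γ`-isometry. -/
theorem stmt11 {V : Type} [AddCommGroup V] [Module ℝ V] [FiniteDimensional ℝ V]
    (γ ψ : V →ₗ[ℝ] Module.Dual ℝ V)
    (hγsym : ∀ X Y, γ X Y = γ Y X)
    (hγpos : ∀ X, X ≠ 0 → 0 < γ X X)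
    (hψskew : ∀ X Y, ψ X Y = - ψ Y X)
    (P : Module.Dual ℝ V →ₗ[ℝ] V)
    (hPskew : ∀ α β : Module.Dual ℝ V, α (P β) = - β (P α))
    (Qp Qm : V →ₗ[ℝ] V)
    (hQp : ∀ X Z : V, γ (Qp X) Z = (ψ + γ) (P (γ X)) Z)
    (hQm : ∀ X Z : V, γ (Qm X) Z = - ((ψ - γ) (P (γ X)) Z))
    (R : V →ₗ[ℝ] V)
    (hR1 : (Qm + LinearMap.id) ∘ₗ R = LinearMap.id)
    (hR2 : R ∘ₗ (Qm + LinearMap.id) = LinearMap.id) :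
    ∀ X Y : V,
      γ ((Qp - (LinearMap.id : V →ₗ[ℝ] V)) (R X)) ((Qp - (LinearMap.id : V →ₗ[ℝ] V)) (R Y)) = γ X Y :=
  stmt11_general γ ψ hγsym hγpos hψskew P hPskew Qp Qm hQp hQm R hR1
end

section
/- Let (W, g, φ, G) be a generalized Riemannian vector space and E a g-isotropic subspace. Then φ(E) is also g-isotropic, φ(E^{⊥_g}) = (φ(E))^{⊥_g}, and (E^{⊥_G})^{⊥_g} = (E^{⊥_g})^{⊥_G} = φ(E). -/
/-!
Since `φ` is an involutive `g`-isometry, it carries `g`-orthogonal complements to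
`g`-orthogonal complements, and `w ⊥_G e` means `φ w ⊥_g e`, so `s^{⊥_G} = φ(s^{⊥_g})`.
Hence `(E^{⊥_G})^{⊥_g} = (φ(E^{⊥_g}))^{⊥_g} = ((φE)^{⊥_g})^{⊥_g}` and
`(E^{⊥_g})^{⊥_G} = φ((E^{⊥_g})^{⊥_g})`, and both equal `φE` because taking the
orthogonal complement twice is the identity on subspaces for a nondegenerate symmetric form
in finite dimension.
-/

open Set Function

def perpSet {V R : Type*} [Zero R] (g : V → V → R) (s : Set V) : Set V :=
  {w | ∀ e ∈ s, g w e = 0}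

section Involution

variable {V R : Type*} [Zero R] {g : V → V → R} {φ : V → V}

theorem image_perpSet_of_isometry (hφ : Involutive φ) (hiso : ∀ u v, g (φ u) (φ v) = g u v)
    (s : Set V) : φ '' perpSet g s = perpSet g (φ '' s) := by
  ext w
  simp only [hφ.image_eq_preimage_symm, perpSet, mem_preimage, mem_ofPred_eq]
  exact hφ.surjective.forall.trans (forall_congr' fun e => by rw [hiso])

theorem perpSet_comp_eq_image (hφ : Involutive φ) (s : Set V) :
    perpSet (fun u v => g (φ u) v) s = φ '' perpSet g s := by
  rw [hφ.image_eq_preimage_symm]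
  rfl

end Involution

section Bilinear

variable {K V : Type*} [Field K] [AddCommGroup V] [Module K V] {g : V →ₗ[K] V →ₗ[K] K}

theorem perpSet_eq_orthogonal (hsym : ∀ u v, g u v = g v u) (S : Submodule K V) :
    perpSet (fun u v => g u v) S = LinearMap.BilinForm.orthogonal g S := by
  ext w
  exact forall₂_congr fun e _ => by rw [hsym]

theorem perpSet_perpSet [FiniteDimensional K V] (hsym : ∀ u v, g u v = g v u)
    (hnd : ∀ u, (∀ v, g u v = 0) → u = 0) (S : Submodule K V) :
    perpSet (fun u v => g u v) (perpSet (fun u v => g u v) S) = S := by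
  have hrefl : LinearMap.BilinForm.IsRefl g := fun u v h => (hsym u v).symm.trans h
  have hndg : LinearMap.BilinForm.Nondegenerate g :=
    ⟨hnd, fun u h => hnd u fun v => (hsym u v).trans (h v)⟩
  rw [perpSet_eq_orthogonal hsym, perpSet_eq_orthogonal hsym,
    LinearMap.BilinForm.orthogonal_orthogonal hndg hrefl]

end Bilinear

theorem stmt13_general {W : Type} [AddCommGroup W] [Module ℝ W] [FiniteDimensional ℝ W]
    (g : W →ₗ[ℝ] W →ₗ[ℝ] ℝ)
    (hsym : ∀ u v, g u v = g v u)
    (hnd : ∀ u, (∀ v, g u v = 0) → u = 0)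
    (φ : W →ₗ[ℝ] W)
    (hφ2 : φ ∘ₗ φ = LinearMap.id)
    (hφiso : ∀ u v, g (φ u) (φ v) = g u v)
    (E : Submodule ℝ W)
    (hiso : ∀ e ∈ E, ∀ f ∈ E, g e f = 0) :
    let G : W → W → ℝ := fun u v => g (φ u) v
    let perpg : Set W → Set W := fun s => {w | ∀ e ∈ s, g w e = 0}
    let perpG : Set W → Set W := fun s => {w | ∀ e ∈ s, G w e = 0}
    (∀ x ∈ φ '' (E : Set W), ∀ y ∈ φ '' (E : Set W), g x y = 0) ∧
    φ '' perpg (E : Set W) = perpg (φ '' (E : Set W)) ∧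
    perpg (perpG (E : Set W)) = φ '' (E : Set W) ∧
    perpG (perpg (E : Set W)) = φ '' (E : Set W) := by
  intro G perpg perpG
  have hφ : Involutive φ := LinearMap.congr_fun hφ2
  have himage : φ '' perpSet (fun u v => g u v) E = perpSet (fun u v => g u v) (φ '' E) :=
    image_perpSet_of_isometry hφ hφiso E
  refine ⟨?_, himage, ?_, ?_⟩
  · rintro _ ⟨e, he, rfl⟩ _ ⟨f, hf, rfl⟩
    rw [hφiso]
    exact hiso e he f hf
  · change perpSet (fun u v => g u v) (perpSet (fun u v => g (φ u) v) E) = _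
    rw [perpSet_comp_eq_image (g := fun u v => g u v) hφ, himage, ← Submodule.map_coe, perpSet_perpSet hsym hnd]
  · change perpSet (fun u v => g (φ u) v) (perpSet (fun u v => g u v) E) = _
    rw [perpSet_comp_eq_image (g := fun u v => g u v) hφ, perpSet_perpSet hsym hnd]

/-- for a `g`-isotropic subspace `E` of a generalized Riemannian
vector space, `φ(E)` is `g`-isotropic, `φ(E^{⊥_g}) = (φE)^{⊥_g}` and
`(E^{⊥_G})^{⊥_g} = (E^{⊥_g})^{⊥_G} = φ(E)`. -/
theorem stmt13 {W : Type} [AddCommGroup W] [Module ℝ W] [FiniteDimensional ℝ W]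
    (g : W →ₗ[ℝ] W →ₗ[ℝ] ℝ)
    (hsym : ∀ u v, g u v = g v u)
    (hnd : ∀ u, (∀ v, g u v = 0) → u = 0)
    (φ : W →ₗ[ℝ] W)
    (hφ2 : φ ∘ₗ φ = LinearMap.id)
    (hφiso : ∀ u v, g (φ u) (φ v) = g u v)
    (hpos : ∀ u, u ≠ 0 → 0 < g (φ u) u)
    (E : Submodule ℝ W)
    (hiso : ∀ e ∈ E, ∀ f ∈ E, g e f = 0) :
    let G : W → W → ℝ := fun u v => g (φ u) v
    let perpg : Set W → Set W := fun s => {w | ∀ e ∈ s, g w e = 0}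
    let perpG : Set W → Set W := fun s => {w | ∀ e ∈ s, G w e = 0}
    (∀ x ∈ φ '' (E : Set W), ∀ y ∈ φ '' (E : Set W), g x y = 0) ∧
    φ '' perpg (E : Set W) = perpg (φ '' (E : Set W)) ∧
    perpg (perpG (E : Set W)) = φ '' (E : Set W) ∧
    perpG (perpg (E : Set W)) = φ '' (E : Set W) :=
  stmt13_general g hsym hnd φ hφ2 hφiso E hiso
end

section
/- Let (W, g, φ, G) be a generalized Riemannian vector space, E a g-isotropic subspace, and S the G-orthogonal complement of E within E^{⊥_g} (so E^{⊥_g} = E ⊕_{⊥_G} S). Then W decomposes G-orthogonally as W = (E ⊕_{⊥_G} φ(E)) ⊕_{⊥_G} S, and both E ⊕ φ(E) and S are invariant under φ. -/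
/-!
The form `G = g ∘ φ` is symmetric and positive definite, so every subspace is a
`G`-orthogonal direct summand of `W`. For `U = E ⊕ φ(E)`, the `G`-orthogonal of `U` is
exactly `S`: since `φ` is an involutive `g`-isometry, `G`-orthogonality to `φ(e)` is
`g`-orthogonality to `e`. Finally `φ` swaps the summands `E` and `φ(E)`, and swaps the two
defining conditions of `S`.
-/

open Function Set
open LinearMap (BilinForm)

theorem Function.Involutive.image_eq_of_mapsTo {α : Type*} {f : α → α} {s : Set α}
    (hf : Involutive f) (h : MapsTo f s s) : f '' s = s :=
  h.image_subset.antisymm fun x hx => ⟨f x, h hx, hf x⟩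

namespace LinearMap.BilinForm

theorem isCompl_orthogonal_of_anisotropic {K V : Type*} [Field K] [AddCommGroup V] [Module K V]
    [FiniteDimensional K V] {B : BilinForm K V} (hB : B.IsRefl) (hanis : ∀ x, B x x = 0 → x = 0)
    (U : Submodule K V) : IsCompl U (B.orthogonal U) :=
  (isCompl_orthogonal_iff_disjoint hB).2 <|
    Submodule.disjoint_def.2 fun x hxU hxU' => hanis x (hxU' x hxU)

section Involution

variable {R M : Type*} [CommRing R] [AddCommGroup M] [Module R M] {g : BilinForm R M}
  {φ : M →ₗ[R] M}

theorem comp_apply_comm_of_isometry (hsym : ∀ u v, g u v = g v u) (hφ : Involutive φ)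
    (hiso : ∀ u v, g (φ u) (φ v) = g u v) (u v : M) : g (φ u) v = g (φ v) u := by
  rw [← hiso (φ u), hφ u, hsym]

theorem mem_orthogonal_sup_map_iff (hsym : ∀ u v, g u v = g v u) (hφ : Involutive φ)
    (hiso : ∀ u v, g (φ u) (φ v) = g u v) {E : Submodule R M} {s : M} :
    s ∈ orthogonal (g ∘ₗ φ) (E ⊔ E.map φ) ↔
      (∀ e ∈ E, g s e = 0) ∧ ∀ e ∈ E, g (φ s) e = 0 := by
  have hcomm := comp_apply_comm_of_isometry hsym hφ hiso
  simp only [mem_orthogonal_iff]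
  constructor
  · intro h
    refine ⟨fun e he => ?_, fun e he => ?_⟩
    · simpa [hφ e, hsym e] using h _ (Submodule.mem_sup_right (Submodule.mem_map_of_mem he))
    · rw [hcomm]
      exact h e (Submodule.mem_sup_left he)
  · rintro ⟨h₁, h₂⟩ n hn
    obtain ⟨e, he, _, ⟨f, hf, rfl⟩, rfl⟩ := Submodule.mem_sup.1 hn
    simp [hφ f, hcomm e, hsym f, h₁ f hf, h₂ e he]

end Involution

end LinearMap.BilinForm

open LinearMap.BilinForm

theorem stmt14_general {W : Type} [AddCommGroup W] [Module ℝ W] [FiniteDimensional ℝ W]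
    (g : W →ₗ[ℝ] W →ₗ[ℝ] ℝ)
    (hsym : ∀ u v, g u v = g v u)
    (φ : W →ₗ[ℝ] W)
    (hφ2 : φ ∘ₗ φ = LinearMap.id)
    (hφiso : ∀ u v, g (φ u) (φ v) = g u v)
    (hpos : ∀ u, u ≠ 0 → 0 < g (φ u) u)
    (E : Submodule ℝ W)
    (hiso : ∀ e ∈ E, ∀ f ∈ E, g e f = 0) :
    let G : W → W → ℝ := fun u v => g (φ u) v
    let S : Set W := {s | (∀ e ∈ E, g s e = 0) ∧ (∀ e ∈ E, G s e = 0)}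
    let EφE : Set W := {w | ∃ e ∈ E, ∃ f ∈ E, w = e + φ f}
    (∀ w : W, ∃ e ∈ E, ∃ f ∈ φ '' (E : Set W), ∃ s ∈ S, w = e + f + s) ∧
    (∀ e ∈ E, ∀ f ∈ φ '' (E : Set W), G e f = 0) ∧
    (∀ e ∈ E, ∀ s ∈ S, G e s = 0) ∧
    (∀ f ∈ φ '' (E : Set W), ∀ s ∈ S, G f s = 0) ∧
    φ '' EφE = EφE ∧
    φ '' S = S := by
  intro G S EφE
  have hφ : Involutive φ := LinearMap.congr_fun hφ2
  have hcomm := comp_apply_comm_of_isometry hsym hφ hφiso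
  have hS : ∀ s, s ∈ orthogonal (g ∘ₗ φ) (E ⊔ E.map φ) ↔ s ∈ S := fun s =>
    mem_orthogonal_sup_map_iff hsym hφ hφiso
  have hcompl : IsCompl (E ⊔ E.map φ) (orthogonal (g ∘ₗ φ) (E ⊔ E.map φ)) :=
    isCompl_orthogonal_of_anisotropic (fun u v h => (hcomm v u).trans h)
      (fun u hu => by_contra fun h => (hpos u h).ne' hu) _
  refine ⟨fun w => ?_, ?_, ?_, ?_, hφ.image_eq_of_mapsTo ?_, hφ.image_eq_of_mapsTo ?_⟩
  · obtain ⟨u, hu, s, hs, rfl⟩ :=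
      Submodule.mem_sup.1 (hcompl.sup_eq_top ▸ Submodule.mem_top (x := w))
    obtain ⟨e, he, _, ⟨f, hf, rfl⟩, rfl⟩ := Submodule.mem_sup.1 hu
    exact ⟨e, he, φ f, mem_image_of_mem φ hf, s, (hS s).1 hs, rfl⟩
  · rintro e he _ ⟨f, hf, rfl⟩
    exact (hφiso e f).trans (hiso e he f hf)
  · exact fun e he s hs => (hS s).2 hs e (Submodule.mem_sup_left he)
  · rintro _ ⟨f, hf, rfl⟩ s hs
    exact (hS s).2 hs _ (Submodule.mem_sup_right (Submodule.mem_map_of_mem hf))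
  · rintro _ ⟨e, he, f, hf, rfl⟩
    exact ⟨f, hf, e, he, by rw [map_add, hφ f, add_comm]⟩
  · exact fun s hs => ⟨hs.2, by simpa [G, hφ s] using hs.1⟩

/-- with `S` the `G`-orthogonal complement of `E` inside
`E^{⊥_g}`, one has the `G`-orthogonal decomposition
`W = (E ⊕_{⊥_G} φ(E)) ⊕_{⊥_G} S`, with `E ⊕ φ(E)` and `S` invariant by `φ`. -/
theorem stmt14 {W : Type} [AddCommGroup W] [Module ℝ W] [FiniteDimensional ℝ W]
    (g : W →ₗ[ℝ] W →ₗ[ℝ] ℝ)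
    (hsym : ∀ u v, g u v = g v u)
    (hnd : ∀ u, (∀ v, g u v = 0) → u = 0)
    (φ : W →ₗ[ℝ] W)
    (hφ2 : φ ∘ₗ φ = LinearMap.id)
    (hφiso : ∀ u v, g (φ u) (φ v) = g u v)
    (hpos : ∀ u, u ≠ 0 → 0 < g (φ u) u)
    (E : Submodule ℝ W)
    (hiso : ∀ e ∈ E, ∀ f ∈ E, g e f = 0) :
    let G : W → W → ℝ := fun u v => g (φ u) v
    let S : Set W := {s | (∀ e ∈ E, g s e = 0) ∧ (∀ e ∈ E, G s e = 0)}
    let EφE : Set W := {w | ∃ e ∈ E, ∃ f ∈ E, w = e + φ f}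
    (∀ w : W, ∃ e ∈ E, ∃ f ∈ φ '' (E : Set W), ∃ s ∈ S, w = e + f + s) ∧
    (∀ e ∈ E, ∀ f ∈ φ '' (E : Set W), G e f = 0) ∧
    (∀ e ∈ E, ∀ s ∈ S, G e s = 0) ∧
    (∀ f ∈ φ '' (E : Set W), ∀ s ∈ S, G f s = 0) ∧
    φ '' EφE = EφE ∧
    φ '' S = S :=
  stmt14_general g hsym φ hφ2 hφiso hpos E hiso
end

section
/- Let τ be a g-skew-symmetric 2-nilpotent endomorphism of a generalized Riemannian vector space (W,g,φ,G) with E = im τ, and let λ = τ∘φ restricted to E. Then G(τu, τv) = G(u,v) for all u, v ∈ φ(E) if and only if λ² = −Id on E. -/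
/-!
Since `τ` is `g`-skew with image `E`, the image is `g`-orthogonal to `ker τ` from either side.
Positivity of `G` then makes `λ = τ ∘ φ` injective on `E`, hence bijective, so every `τ x` is of
the form `τ (φ s)` with `s ∈ E`. Skewness turns `G(τ φ e, τ φ s) = G(φ e, φ s)` into
`g(τ φ τ φ e + e, φ s) = 0`, and the orthogonality of `E` and `ker τ` lets `φ s` be replaced by an
arbitrary `x`; nondegeneracy of `g` finishes. The converse is a direct computation.
-/

namespace GeneralizedRiemannian

open LinearMap

variable {R W : Type*} [AddCommGroup W]

section CommRing

variable [CommRing R] [Module R W] {g : W →ₗ[R] W →ₗ[R] R} {φ τ : W →ₗ[R] W}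

def lambdaMap (τ φ : W →ₗ[R] W) : range τ →ₗ[R] range τ :=
  (τ ∘ₗ φ).restrict fun x _ => mem_range_self τ (φ x)

lemma apply_eq_zero_of_mem_range_of_mem_ker (hskew : ∀ u v, g (τ u) v = - g u (τ v))
    {e x : W} (he : e ∈ range τ) (hx : τ x = 0) : g e x = 0 := by
  obtain ⟨w, rfl⟩ := he
  rw [hskew, hx, map_zero, neg_zero]

lemma apply_eq_zero_of_mem_ker_of_mem_range (hskew : ∀ u v, g (τ u) v = - g u (τ v))
    {x e : W} (hx : τ x = 0) (he : e ∈ range τ) : g x e = 0 := by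
  obtain ⟨w, rfl⟩ := he
  rw [← neg_eq_zero, ← hskew, hx, map_zero, LinearMap.zero_apply]

lemma apply_eq_apply_of_mem_range (hskew : ∀ u v, g (τ u) v = - g u (τ v))
    {e x y : W} (he : e ∈ range τ) (hxy : τ x = τ y) : g e x = g e y := by
  rw [← sub_eq_zero, ← map_sub]
  exact apply_eq_zero_of_mem_range_of_mem_ker hskew he (by rw [map_sub, hxy, sub_self])

lemma lambdaMap_injective (hskew : ∀ u v, g (τ u) v = - g u (τ v))
    (hanis : ∀ u, u ≠ 0 → g (φ u) u ≠ 0) : Function.Injective (lambdaMap τ φ) := by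
  rw [injective_iff_map_eq_zero]
  rintro ⟨_, w, rfl⟩ h
  have hker : τ (φ (τ w)) = 0 := congrArg Subtype.val h
  by_contra hne
  exact hanis (τ w) (fun h0 => hne (Subtype.ext h0))
    (apply_eq_zero_of_mem_ker_of_mem_range hskew hker (mem_range_self τ w))

end CommRing

lemma exists_mem_range_apply_comp_eq {K : Type*} [Field K] [Module K W] [FiniteDimensional K W]
    {g : W →ₗ[K] W →ₗ[K] K} {φ τ : W →ₗ[K] W}
    (hskew : ∀ u v, g (τ u) v = - g u (τ v)) (hanis : ∀ u, u ≠ 0 → g (φ u) u ≠ 0) (x : W) :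
    ∃ s ∈ range τ, τ (φ s) = τ x := by
  obtain ⟨⟨s, hs⟩, hsx⟩ :=
    injective_iff_surjective.mp (lambdaMap_injective hskew hanis) ⟨τ x, mem_range_self τ x⟩
  exact ⟨s, hs, congrArg Subtype.val hsx⟩

end GeneralizedRiemannian

open GeneralizedRiemannian in
theorem stmt15_general {W : Type} [AddCommGroup W] [Module ℝ W] [FiniteDimensional ℝ W]
    (g : W →ₗ[ℝ] W →ₗ[ℝ] ℝ)
    (hnd : ∀ u, (∀ v, g u v = 0) → u = 0)
    (φ : W →ₗ[ℝ] W)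
    (hφ2 : φ ∘ₗ φ = LinearMap.id)
    (hpos : ∀ u, u ≠ 0 → 0 < g (φ u) u)
    (τ : W →ₗ[ℝ] W)
    (hskew : ∀ u v, g (τ u) v = - g u (τ v)) :
    (∀ u ∈ Submodule.map φ (LinearMap.range τ),
     ∀ v ∈ Submodule.map φ (LinearMap.range τ),
        g (φ (τ u)) (τ v) = g (φ u) v) ↔
    (∀ e ∈ LinearMap.range τ, τ (φ (τ (φ e))) = -e) := by
  have hφ (x : W) : φ (φ x) = x := LinearMap.congr_fun hφ2 x
  constructor
  · intro H e he
    refine eq_neg_of_add_eq_zero_left (hnd _ fun x => ?_)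
    obtain ⟨s, hs, hsx⟩ :=
      exists_mem_range_apply_comp_eq hskew (fun u hu => (hpos u hu).ne') x
    have hG := H (φ e) ⟨e, he, rfl⟩ (φ s) ⟨s, hs, rfl⟩
    rw [hφ] at hG
    rw [map_add, LinearMap.add_apply, hskew, ← hsx, hG,
      apply_eq_apply_of_mem_range hskew he hsx, neg_add_cancel]
  · rintro H _ ⟨e, he, rfl⟩ _ ⟨f, -, rfl⟩
    rw [hφ, ← neg_neg (g (φ (τ (φ e))) _), ← hskew, H e he, map_neg, LinearMap.neg_apply, neg_neg]

/-- `G(τu, τv) = G(u,v)` for all `u, v ∈ φ(E)` iff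
`λ = τ∘φ` satisfies `λ² = −Id` on `E = im τ`. -/
theorem stmt15 {W : Type} [AddCommGroup W] [Module ℝ W] [FiniteDimensional ℝ W]
    (g : W →ₗ[ℝ] W →ₗ[ℝ] ℝ)
    (hsym : ∀ u v, g u v = g v u)
    (hnd : ∀ u, (∀ v, g u v = 0) → u = 0)
    (φ : W →ₗ[ℝ] W)
    (hφ2 : φ ∘ₗ φ = LinearMap.id)
    (hφiso : ∀ u v, g (φ u) (φ v) = g u v)
    (hpos : ∀ u, u ≠ 0 → 0 < g (φ u) u)
    (τ : W →ₗ[ℝ] W)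
    (hτ2 : τ ∘ₗ τ = 0)
    (hskew : ∀ u v, g (τ u) v = - g u (τ v)) :
    (∀ u ∈ Submodule.map φ (LinearMap.range τ),
     ∀ v ∈ Submodule.map φ (LinearMap.range τ),
        g (φ (τ u)) (τ v) = g (φ u) v) ↔
    (∀ e ∈ LinearMap.range τ, τ (φ (τ (φ e))) = -e) :=
  stmt15_general g hnd φ hφ2 hpos τ hskew
end

section
/- Let τ be 2-nilpotent, g-skew-symmetric, G-compatible on (W,g,φ,G). Then the endomorphism λ̃ = τ∘φ of W satisfies λ̃³ + λ̃ = 0, and likewise λ̃' = φ∘τ satisfies λ̃'³ + λ̃' = 0. -/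
namespace LinearMap

variable {R M N : Type*} [Semiring R] [AddCommGroup M] [AddCommGroup N] [Module R M]
  [Module R N]

theorem comp_cube_add_self_eq_zero_of_sq_eq_neg_on_range (f : N →ₗ[R] M) (g : M →ₗ[R] N)
    (h : ∀ e ∈ range f, f (g (f (g e))) = -e) :
    (f ∘ₗ g) ∘ₗ (f ∘ₗ g) ∘ₗ (f ∘ₗ g) + f ∘ₗ g = 0 := by
  ext u
  simp only [add_apply, comp_apply, zero_apply, h (f (g u)) ⟨g u, rfl⟩, neg_add_cancel]

theorem comp_swap_cube_add_self_eq_zero_of_sq_eq_neg_on_range (f : N →ₗ[R] M) (g : M →ₗ[R] N)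
    (h : ∀ e ∈ range f, f (g (f (g e))) = -e) :
    (g ∘ₗ f) ∘ₗ (g ∘ₗ f) ∘ₗ (g ∘ₗ f) + g ∘ₗ f = 0 := by
  ext u
  simp only [add_apply, comp_apply, zero_apply, h (f u) ⟨u, rfl⟩, map_neg, neg_add_cancel]

end LinearMap

theorem stmt17_general {W : Type} [AddCommGroup W] [Module ℝ W]
    (φ : W →ₗ[ℝ] W)
    (τ : W →ₗ[ℝ] W)
    (hcompat : ∀ e ∈ LinearMap.range τ, τ (φ (τ (φ e))) = -e) :
    (τ ∘ₗ φ) ∘ₗ (τ ∘ₗ φ) ∘ₗ (τ ∘ₗ φ) + τ ∘ₗ φ = 0 ∧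
    (φ ∘ₗ τ) ∘ₗ (φ ∘ₗ τ) ∘ₗ (φ ∘ₗ τ) + φ ∘ₗ τ = 0 :=
  ⟨τ.comp_cube_add_self_eq_zero_of_sq_eq_neg_on_range φ hcompat,
    τ.comp_swap_cube_add_self_eq_zero_of_sq_eq_neg_on_range φ hcompat⟩

/-- for a `G`-compatible 2-nilpotent `τ`, `λ̃ = τ∘φ` satisfies
`λ̃³ + λ̃ = 0`, and `λ̃' = φ∘τ` satisfies `λ̃'³ + λ̃' = 0`. -/
theorem stmt17 {W : Type} [AddCommGroup W] [Module ℝ W] [FiniteDimensional ℝ W]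
    (g : W →ₗ[ℝ] W →ₗ[ℝ] ℝ)
    (hsym : ∀ u v, g u v = g v u)
    (hnd : ∀ u, (∀ v, g u v = 0) → u = 0)
    (φ : W →ₗ[ℝ] W)
    (hφ2 : φ ∘ₗ φ = LinearMap.id)
    (hφiso : ∀ u v, g (φ u) (φ v) = g u v)
    (hpos : ∀ u, u ≠ 0 → 0 < g (φ u) u)
    (τ : W →ₗ[ℝ] W)
    (hτ2 : τ ∘ₗ τ = 0)
    (hskew : ∀ u v, g (τ u) v = - g u (τ v))
    (hcompat : ∀ e ∈ LinearMap.range τ, τ (φ (τ (φ e))) = -e) :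
    (τ ∘ₗ φ) ∘ₗ (τ ∘ₗ φ) ∘ₗ (τ ∘ₗ φ) + τ ∘ₗ φ = 0 ∧
    (φ ∘ₗ τ) ∘ₗ (φ ∘ₗ τ) ∘ₗ (φ ∘ₗ τ) + φ ∘ₗ τ = 0 :=
  stmt17_general φ τ hcompat
end

section
/- Let (W,g,φ,G) be a generalized Riemannian vector space and τ a G-compatible 2-nilpotent g-skew-symmetric endomorphism. Then Φ := τ∘φ + φ∘τ satisfies Φ³ + Φ = 0, g(Φu,v) + g(u,Φv) = 0, and G(Φu,v) + G(u,Φv) = 0 for all u,v ∈ W (i.e., Φ is a generalized metric F-structure). -/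
/-!
Since `φ² = 1` and `τ² = 0`, expanding gives `Φ³ = τφτφτφ + φτφτφτ`, and `G`-compatibility
(`τφτφ = -1` on `im τ`) turns this into `-Φ`. As `φ` is `g`-self-adjoint and `τ` is `g`-skew,
`Φ` is `g`-skew; as moreover `Φ` commutes with `φ`, it is also skew for `G = g(φ ·, ·)`.
-/

theorem mul_add_mul_pow_three_add_self_eq_zero {A : Type*} [Ring A] {a b : A}
    (ha : a * a = 1) (hb : b * b = 0) (hbab : b * a * b * a * b = -b) :
    (b * a + a * b) ^ 3 + (b * a + a * b) = 0 := by
  have ha' (x : A) : a * (a * x) = x := by rw [← mul_assoc, ha, one_mul]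
  have hb' (x : A) : b * (b * x) = 0 := by rw [← mul_assoc, hb, zero_mul]
  have hsq : (b * a + a * b) ^ 2 = b * a * b * a + a * b * a * b := by
    simp only [sq, mul_add, add_mul, mul_assoc, ha', hb, hb', mul_zero, add_zero, zero_add]
  calc (b * a + a * b) ^ 3 + (b * a + a * b)
      = b * a * b * a * b * a + a * (b * a * b * a * b) + (b * a + a * b) := by
        rw [pow_succ, hsq]
        simp only [mul_add, add_mul, mul_assoc, ha', hb, hb', mul_zero, add_zero, zero_add]
    _ = 0 := by
        rw [hbab, mul_neg, neg_mul]; abel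

theorem commute_mul_add_mul {A : Type*} [Ring A] {a b : A} (ha : a * a = 1) :
    Commute a (b * a + a * b) := by
  simp only [Commute, SemiconjBy, mul_add, add_mul, ← mul_assoc, ha, one_mul]
  rw [mul_assoc b a a, ha, mul_one, add_comm]

namespace LinearMap

variable {R M N : Type*} [CommRing R] [AddCommGroup M] [Module R M] [AddCommGroup N] [Module R N]
  {B : M →ₗ[R] M →ₗ[R] N}

theorem isSelfAdjoint_of_involutive_of_isometry {φ : M →ₗ[R] M} (hφ : Function.Involutive φ)
    (hiso : ∀ u v, B (φ u) (φ v) = B u v) : B.IsSelfAdjoint φ := fun u v => by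
  rw [← hiso u (φ v), hφ v]

theorem IsSkewAdjoint.comp_add_comp {φ τ : M →ₗ[R] M} (hτ : IsSkewAdjoint B τ)
    (hφ : B.IsSelfAdjoint φ) : IsSkewAdjoint B (τ ∘ₗ φ + φ ∘ₗ τ) := by
  have h := (hφ.comp hτ).add (hτ.comp hφ)
  intro u v
  simpa [add_comm] using h u v

theorem IsSkewAdjoint.apply_add_apply {f : M →ₗ[R] M} (hf : IsSkewAdjoint B f) (u v : M) :
    B (f u) v + B u (f v) = 0 := by
  rw [hf u v, Pi.neg_apply, map_neg, neg_add_cancel]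

theorem IsSkewAdjoint.comp_of_commute {φ Φ : M →ₗ[R] M} (hΦ : IsSkewAdjoint B Φ)
    (hcomm : Commute φ Φ) : IsSkewAdjoint (B ∘ₗ φ) Φ := fun u v => by
  rw [comp_apply, ← Module.End.mul_apply, hcomm.eq, Module.End.mul_apply]
  exact hΦ (φ u) v

end LinearMap

theorem stmt18_general {W : Type} [AddCommGroup W] [Module ℝ W]
    (g : W →ₗ[ℝ] W →ₗ[ℝ] ℝ)
    (φ : W →ₗ[ℝ] W)
    (hφ2 : φ ∘ₗ φ = LinearMap.id)
    (hφiso : ∀ u v, g (φ u) (φ v) = g u v)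
    (τ : W →ₗ[ℝ] W)
    (hτ2 : τ ∘ₗ τ = 0)
    (hskew : ∀ u v, g (τ u) v = - g u (τ v))
    (hcompat : ∀ e ∈ LinearMap.range τ, τ (φ (τ (φ e))) = -e) :
    let Φ : W →ₗ[ℝ] W := τ ∘ₗ φ + φ ∘ₗ τ
    let G : W → W → ℝ := fun u v => g (φ u) v
    Φ ∘ₗ Φ ∘ₗ Φ + Φ = 0 ∧
    (∀ u v : W, g (Φ u) v + g u (Φ v) = 0) ∧
    (∀ u v : W, G (Φ u) v + G u (Φ v) = 0) := by
  intro Φ G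
  have hτφτφτ : τ * φ * τ * φ * τ = -τ := LinearMap.ext fun x => hcompat (τ x) ⟨x, rfl⟩
  have hτ : LinearMap.IsSkewAdjoint g τ := fun u v => by rw [hskew, Pi.neg_apply, map_neg]
  have hφ : g.IsSelfAdjoint φ :=
    LinearMap.isSelfAdjoint_of_involutive_of_isometry (LinearMap.congr_fun hφ2) hφiso
  have hΦ : LinearMap.IsSkewAdjoint g Φ := hτ.comp_add_comp hφ
  have hGΦ : LinearMap.IsSkewAdjoint (g ∘ₗ φ) Φ := hΦ.comp_of_commute (commute_mul_add_mul hφ2)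
  refine ⟨?_, hΦ.apply_add_apply, hGΦ.apply_add_apply⟩
  have h := mul_add_mul_pow_three_add_self_eq_zero hφ2 hτ2 hτφτφτ
  rwa [pow_three] at h

/-- `Φ = τ∘φ + φ∘τ` is a generalized metric F-structure:
`Φ³ + Φ = 0`, `Φ` is `g`-skew-symmetric and `G`-skew-symmetric. -/
theorem stmt18 {W : Type} [AddCommGroup W] [Module ℝ W] [FiniteDimensional ℝ W]
    (g : W →ₗ[ℝ] W →ₗ[ℝ] ℝ)
    (hsym : ∀ u v, g u v = g v u)
    (hnd : ∀ u, (∀ v, g u v = 0) → u = 0)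
    (φ : W →ₗ[ℝ] W)
    (hφ2 : φ ∘ₗ φ = LinearMap.id)
    (hφiso : ∀ u v, g (φ u) (φ v) = g u v)
    (hpos : ∀ u, u ≠ 0 → 0 < g (φ u) u)
    (τ : W →ₗ[ℝ] W)
    (hτ2 : τ ∘ₗ τ = 0)
    (hskew : ∀ u v, g (τ u) v = - g u (τ v))
    (hcompat : ∀ e ∈ LinearMap.range τ, τ (φ (τ (φ e))) = -e) :
    let Φ : W →ₗ[ℝ] W := τ ∘ₗ φ + φ ∘ₗ τ
    let G : W → W → ℝ := fun u v => g (φ u) v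
    Φ ∘ₗ Φ ∘ₗ Φ + Φ = 0 ∧
    (∀ u v : W, g (Φ u) v + g u (Φ v) = 0) ∧
    (∀ u v : W, G (Φ u) v + G u (Φ v) = 0) :=
  stmt18_general g φ hφ2 hφiso τ hτ2 hskew hcompat
end

section
/- Let (W,g,φ,G) be a generalized Riemannian vector space with dim W = 2m and suppose τ is a G-compatible generalized almost tangent structure (τ²=0, g-skew-symmetric, rank τ = m), so W = E ⊕ φ(E) with E = im τ. Define Φ = τφ + φτ and let Ψ be Id on E and −Id on φ(E). Then Φ² = −Id, Ψ² = Id, Φ∘Ψ = Ψ∘Φ, both Φ and Ψ are g-skew-symmetric and G-compatible, and τ = (1/2)·Φ∘(Id + Ψ)∘φ. -/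
/-!
`E = im τ` is `g`-isotropic because `τ` is `g`-skew with `τ² = 0`, and so is `φ(E)` since `φ` is a
`g`-isometry. Positivity of `G` forces `E ∩ φ(E) = 0`, hence `W = E ⊕ φ(E)` by counting
dimensions, and every identity can be checked on `E` and on `φ(E)` separately. `Φ` commutes with
`φ` and acts on `E ⊆ ker τ` as `τφ`, so `Φ² = -1` is exactly the compatibility `(τφ)² = -1` on `E`;
`Ψ` anticommutes with `φ`. A `g`-skew endomorphism `A` with `AφA = -φ` preserves `G`.
-/

open Module LinearMap Submodule

def Submodule.IsIsotropic {R M : Type*} [CommRing R] [AddCommGroup M] [Module R M]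
    (g : M →ₗ[R] M →ₗ[R] R) (E : Submodule R M) : Prop :=
  ∀ x ∈ E, ∀ y ∈ E, g x y = 0

section BilinearForm

variable {R M : Type*} [CommRing R] [AddCommGroup M] [Module R M] {g : M →ₗ[R] M →ₗ[R] R}

theorem LinearMap.isIsotropic_range_of_skew {τ : M →ₗ[R] M} (hτ : τ ∘ₗ τ = 0)
    (hskew : ∀ u v, g (τ u) v = -g u (τ v)) : (range τ).IsIsotropic g := by
  rintro _ ⟨a, rfl⟩ _ ⟨b, rfl⟩
  rw [hskew, ← comp_apply τ τ, hτ, zero_apply, map_zero, neg_zero]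

theorem Submodule.IsIsotropic.map {E : Submodule R M} (hE : E.IsIsotropic g) {φ : M →ₗ[R] M}
    (hiso : ∀ u v, g (φ u) (φ v) = g u v) : (E.map φ).IsIsotropic g := by
  rintro _ ⟨x, hx, rfl⟩ _ ⟨y, hy, rfl⟩
  rw [hiso, hE x hx y hy]

theorem Submodule.IsIsotropic.disjoint_map [Preorder R] {E : Submodule R M}
    (hE : E.IsIsotropic g) {φ : M →ₗ[R] M} (hφ : Function.Involutive φ)
    (hpos : ∀ u, u ≠ 0 → 0 < g (φ u) u) : Disjoint E (E.map φ) := by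
  rw [disjoint_def]
  rintro _ hx ⟨e, he, rfl⟩
  by_contra hne
  have h := hpos _ hne
  rw [hφ e, hE e he _ hx] at h
  exact lt_irrefl 0 h

theorem Submodule.IsIsotropic.isCompl_map {K V : Type*} [Field K] [Preorder K] [AddCommGroup V]
    [Module K V] [FiniteDimensional K V] {g : V →ₗ[K] V →ₗ[K] K} {E : Submodule K V}
    (hE : E.IsIsotropic g) {φ : V →ₗ[K] V} (hφ : Function.Involutive φ)
    (hpos : ∀ u, u ≠ 0 → 0 < g (φ u) u) (hdim : finrank K V = 2 * finrank K E) :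
    IsCompl E (E.map φ) := by
  have hmap : finrank K (E.map φ) = finrank K E :=
    (LinearEquiv.ofInvolutive φ hφ).finrank_map_eq E
  exact (isCompl_iff_disjoint _ _ (by omega)).mpr (hE.disjoint_map hφ hpos)

theorem apply_left_eq_apply_right_of_involutive {φ : M →ₗ[R] M} (hφ : Function.Involutive φ)
    (hiso : ∀ u v, g (φ u) (φ v) = g u v) (u v : M) : g (φ u) v = g u (φ v) := by
  rw [← hiso, hφ]

theorem twisted_isometry_of_skew {A φ : M →ₗ[R] M} (hskew : ∀ u v, g (A u) v = -g u (A v))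
    (hAφA : ∀ u, A (φ (A u)) = -φ u) (u v : M) : g (φ (A u)) (A v) = g (φ u) v := by
  rw [← neg_neg (g (φ (A u)) (A v)), ← hskew, hAφA, map_neg, LinearMap.neg_apply, neg_neg]

end BilinearForm

section Reflection

variable {R M : Type*} [CommRing R] [AddCommGroup M] [Module R M] {E F : Submodule R M}
  {Ψ : M →ₗ[R] M}

theorem comp_self_eq_id_of_reflection (hEF : Codisjoint E F) (hE : ∀ e ∈ E, Ψ e = e)
    (hF : ∀ f ∈ F, Ψ f = -f) : Ψ ∘ₗ Ψ = LinearMap.id :=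
  ext_on_codisjoint hEF (fun e he => by simp [hE e he]) (fun f hf => by simp [hF f hf])

theorem comp_comm_of_reflection (hEF : Codisjoint E F) (hE : ∀ e ∈ E, Ψ e = e)
    (hF : ∀ f ∈ F, Ψ f = -f) {A : M →ₗ[R] M} (hAE : ∀ e ∈ E, A e ∈ E) (hAF : ∀ f ∈ F, A f ∈ F) :
    A ∘ₗ Ψ = Ψ ∘ₗ A :=
  ext_on_codisjoint hEF (fun e he => by simp [hE e he, hE _ (hAE e he)])
    (fun f hf => by simp [hF f hf, hF _ (hAF f hf)])

theorem skew_of_reflection {g : M →ₗ[R] M →ₗ[R] R} (hEF : Codisjoint E F) (hE : ∀ e ∈ E, Ψ e = e)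
    (hF : ∀ f ∈ F, Ψ f = -f) (hEiso : E.IsIsotropic g) (hFiso : F.IsIsotropic g) (u v : M) :
    g (Ψ u) v = -g u (Ψ v) := by
  obtain ⟨e, he, f, hf, rfl⟩ := mem_sup.mp (hEF.eq_top ▸ mem_top : u ∈ E ⊔ F)
  obtain ⟨e', he', f', hf', rfl⟩ := mem_sup.mp (hEF.eq_top ▸ mem_top : v ∈ E ⊔ F)
  simp only [map_add, hE e he, hF f hf, hE e' he', hF f' hf', map_neg, LinearMap.add_apply,
    LinearMap.neg_apply, hEiso e he e' he', hFiso f hf f' hf']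
  ring

theorem anticomm_of_reflection {φ : M →ₗ[R] M} (hφ : Function.Involutive φ)
    (hEF : Codisjoint E (E.map φ)) (hE : ∀ e ∈ E, Ψ e = e) (hF : ∀ f ∈ E.map φ, Ψ f = -f)
    (u : M) : φ (Ψ u) = -Ψ (φ u) := by
  refine LinearMap.congr_fun (ext_on_codisjoint (f := φ ∘ₗ Ψ) (g := -(Ψ ∘ₗ φ)) hEF
    (fun e he => ?_) ?_) u
  · simp [hE e he, hF _ (mem_map_of_mem he)]
  · rintro _ ⟨e, he, rfl⟩
    simp [hF _ (mem_map_of_mem he), hφ e, hE e he]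

end Reflection

section Anticommutator

variable {R M : Type*} [CommRing R] [AddCommGroup M] [Module R M] {φ τ : M →ₗ[R] M}

local notation "Φ" => τ ∘ₗ φ + φ ∘ₗ τ

theorem anticommutator_apply_involutive (hφ : Function.Involutive φ) (u : M) :
    Φ (φ u) = φ (Φ u) := by
  simp [hφ u, hφ (τ u), add_comm]

theorem anticommutator_apply_of_mem_ker {u : M} (hu : u ∈ ker τ) : Φ u = τ (φ u) := by
  simp [mem_ker.mp hu]

theorem anticommutator_mem_range (hτ : τ ∘ₗ τ = 0) {e : M} (he : e ∈ range τ) :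
    Φ e ∈ range τ := by
  rw [anticommutator_apply_of_mem_ker (range_le_ker_iff.mpr hτ he)]
  exact mem_range_self τ (φ e)

theorem anticommutator_mem_map_range (hφ : Function.Involutive φ) (hτ : τ ∘ₗ τ = 0) {f : M}
    (hf : f ∈ (range τ).map φ) : Φ f ∈ (range τ).map φ := by
  obtain ⟨e, he, rfl⟩ := hf
  rw [anticommutator_apply_involutive hφ]
  exact mem_map_of_mem (anticommutator_mem_range hτ he)

theorem anticommutator_comp_self (hφ : Function.Involutive φ) (hτ : τ ∘ₗ τ = 0)
    (hEF : Codisjoint (range τ) ((range τ).map φ))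
    (hcompat : ∀ e ∈ range τ, τ (φ (τ (φ e))) = -e) : Φ ∘ₗ Φ = -LinearMap.id := by
  have hE : ∀ e ∈ range τ, Φ (Φ e) = -e := fun e he => by
    rw [anticommutator_apply_of_mem_ker (range_le_ker_iff.mpr hτ he),
      anticommutator_apply_of_mem_ker (range_le_ker_iff.mpr hτ (mem_range_self τ (φ e))),
      hcompat e he]
  refine ext_on_codisjoint hEF hE ?_
  rintro _ ⟨e, he, rfl⟩
  show Φ (Φ (φ e)) = -φ e
  rw [anticommutator_apply_involutive hφ, anticommutator_apply_involutive hφ, hE e he, map_neg]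

theorem anticommutator_skew {g : M →ₗ[R] M →ₗ[R] R} (hφ : Function.Involutive φ)
    (hiso : ∀ u v, g (φ u) (φ v) = g u v) (hskew : ∀ u v, g (τ u) v = -g u (τ v)) (u v : M) :
    g (Φ u) v = -g u (Φ v) := by
  simp only [LinearMap.add_apply, comp_apply, map_add, hskew,
    apply_left_eq_apply_right_of_involutive hφ hiso]
  ring

end Anticommutator

theorem eq_half_smul_anticommutator_comp_reflection {K M : Type*} [Field K] [CharZero K]
    [AddCommGroup M] [Module K M] {φ τ Ψ : M →ₗ[K] M} (hφ : Function.Involutive φ)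
    (hτ : τ ∘ₗ τ = 0) (hEF : Codisjoint (range τ) ((range τ).map φ))
    (hE : ∀ e ∈ range τ, Ψ e = e) (hF : ∀ f ∈ (range τ).map φ, Ψ f = -f) :
    τ = (1 / 2 : K) • ((τ ∘ₗ φ + φ ∘ₗ τ) ∘ₗ (LinearMap.id + Ψ) ∘ₗ φ) := by
  have hτE : ∀ e ∈ range τ, τ e = 0 := fun e he => range_le_ker_iff.mpr hτ he
  refine ext_on_codisjoint hEF (fun e he => ?_) ?_
  · simp [hF _ (mem_map_of_mem he), hτE e he]
  · rintro _ ⟨e, he, rfl⟩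
    simp [hφ e, hE e he, hτE e he]
    module

theorem stmt19_general {W : Type} [AddCommGroup W] [Module ℝ W] [FiniteDimensional ℝ W]
    (m : ℕ) (hdim : Module.finrank ℝ W = 2 * m)
    (g : W →ₗ[ℝ] W →ₗ[ℝ] ℝ)
    (φ : W →ₗ[ℝ] W)
    (hφ2 : φ ∘ₗ φ = LinearMap.id)
    (hφiso : ∀ u v, g (φ u) (φ v) = g u v)
    (hpos : ∀ u, u ≠ 0 → 0 < g (φ u) u)
    (τ : W →ₗ[ℝ] W)
    (hτ2 : τ ∘ₗ τ = 0)
    (hskew : ∀ u v, g (τ u) v = - g u (τ v))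
    (hrank : Module.finrank ℝ (LinearMap.range τ) = m)
    (hcompat : ∀ e ∈ LinearMap.range τ, τ (φ (τ (φ e))) = -e)
    (Ψ : W →ₗ[ℝ] W)
    (hΨE : ∀ e ∈ LinearMap.range τ, Ψ e = e)
    (hΨφE : ∀ e ∈ LinearMap.range τ, Ψ (φ e) = -(φ e)) :
    let Φ : W →ₗ[ℝ] W := τ ∘ₗ φ + φ ∘ₗ τ
    let G : W → W → ℝ := fun u v => g (φ u) v
    Φ ∘ₗ Φ = -LinearMap.id ∧
    Ψ ∘ₗ Ψ = LinearMap.id ∧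
    Φ ∘ₗ Ψ = Ψ ∘ₗ Φ ∧
    (∀ u v : W, g (Φ u) v = - g u (Φ v)) ∧
    (∀ u v : W, g (Ψ u) v = - g u (Ψ v)) ∧
    (∀ u v : W, G (Φ u) (Φ v) = G u v) ∧
    (∀ u v : W, G (Ψ u) (Ψ v) = G u v) ∧
    τ = (1/2 : ℝ) • (Φ ∘ₗ (LinearMap.id + Ψ) ∘ₗ φ) := by
  intro Φ G
  have hφ : Function.Involutive φ := LinearMap.congr_fun hφ2
  set E := range τ
  have hEiso : E.IsIsotropic g := isIsotropic_range_of_skew hτ2 hskew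
  have hEF : Codisjoint E (E.map φ) :=
    (hEiso.isCompl_map hφ hpos (by rw [hdim, hrank])).codisjoint
  have hΨF : ∀ f ∈ E.map φ, Ψ f = -f := by
    rintro _ ⟨e, he, rfl⟩
    exact hΨφE e he
  have hΦ2 : Φ ∘ₗ Φ = -LinearMap.id := anticommutator_comp_self hφ hτ2 hEF hcompat
  have hΨ2 : Ψ ∘ₗ Ψ = LinearMap.id := comp_self_eq_id_of_reflection hEF hΨE hΨF
  have hΦskew : ∀ u v, g (Φ u) v = -g u (Φ v) := anticommutator_skew hφ hφiso hskew
  have hΨskew : ∀ u v, g (Ψ u) v = -g u (Ψ v) :=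
    skew_of_reflection hEF hΨE hΨF hEiso (hEiso.map hφiso)
  refine ⟨hΦ2, hΨ2, comp_comm_of_reflection hEF hΨE hΨF (fun _ => anticommutator_mem_range hτ2)
    (fun _ => anticommutator_mem_map_range hφ hτ2), hΦskew, hΨskew,
    twisted_isometry_of_skew hΦskew fun u => ?_, twisted_isometry_of_skew hΨskew fun u => ?_,
    eq_half_smul_anticommutator_comp_reflection hφ hτ2 hEF hΨE hΨF⟩
  · rw [← anticommutator_apply_involutive hφ]
    exact LinearMap.congr_fun hΦ2 (φ u)
  · rw [anticomm_of_reflection hφ hEF hΨE hΨF, map_neg, ← comp_apply Ψ Ψ, hΨ2, id_apply]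

/-- for a `G`-compatible generalized almost tangent structure `τ`
(`τ² = 0`, `g`-skew, `rank τ = m = (dim W)/2`, so `W = E ⊕ φ(E)`), with
`Φ = τφ + φτ` and `Ψ = Id` on `E = im τ`, `−Id` on `φ(E)`, one has `Φ² = −Id`,
`Ψ² = Id`, `ΦΨ = ΨΦ`, `Φ` and `Ψ` are `g`-skew-symmetric and `G`-compatible,
and `τ = (1/2)Φ∘(Id + Ψ)∘φ`. -/
theorem stmt19 {W : Type} [AddCommGroup W] [Module ℝ W] [FiniteDimensional ℝ W]
    (m : ℕ) (hdim : Module.finrank ℝ W = 2 * m)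
    (g : W →ₗ[ℝ] W →ₗ[ℝ] ℝ)
    (hsym : ∀ u v, g u v = g v u)
    (hnd : ∀ u, (∀ v, g u v = 0) → u = 0)
    (φ : W →ₗ[ℝ] W)
    (hφ2 : φ ∘ₗ φ = LinearMap.id)
    (hφiso : ∀ u v, g (φ u) (φ v) = g u v)
    (hpos : ∀ u, u ≠ 0 → 0 < g (φ u) u)
    (τ : W →ₗ[ℝ] W)
    (hτ2 : τ ∘ₗ τ = 0)
    (hskew : ∀ u v, g (τ u) v = - g u (τ v))
    (hrank : Module.finrank ℝ (LinearMap.range τ) = m)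
    (hcompat : ∀ e ∈ LinearMap.range τ, τ (φ (τ (φ e))) = -e)
    (Ψ : W →ₗ[ℝ] W)
    (hΨE : ∀ e ∈ LinearMap.range τ, Ψ e = e)
    (hΨφE : ∀ e ∈ LinearMap.range τ, Ψ (φ e) = -(φ e)) :
    let Φ : W →ₗ[ℝ] W := τ ∘ₗ φ + φ ∘ₗ τ
    let G : W → W → ℝ := fun u v => g (φ u) v
    Φ ∘ₗ Φ = -LinearMap.id ∧
    Ψ ∘ₗ Ψ = LinearMap.id ∧
    Φ ∘ₗ Ψ = Ψ ∘ₗ Φ ∧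
    (∀ u v : W, g (Φ u) v = - g u (Φ v)) ∧
    (∀ u v : W, g (Ψ u) v = - g u (Ψ v)) ∧
    (∀ u v : W, G (Φ u) (Φ v) = G u v) ∧
    (∀ u v : W, G (Ψ u) (Ψ v) = G u v) ∧
    τ = (1/2 : ℝ) • (Φ ∘ₗ (LinearMap.id + Ψ) ∘ₗ φ) :=
  stmt19_general m hdim g φ hφ2 hφiso hpos τ hτ2 hskew hrank hcompat Ψ hΨE hΨφE
end
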